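/- In the one-hidden-layer ReLU ANN setting with constant target α, for a gradient descent sequence Θ_{n+1} = Θ_n − γ G(Θ_n) with step size γ ∈ (0, (4V(Θ_0)+2)^{-1}], it holds for all n ∈ ℕ_0 that V(Θ_{n+1}) − V(Θ_n) ≤ −4γ L_∞(Θ_n) ≤ 0. -/

import Mathlib

open MeasureTheory

noncomputable section

/-- weight parameters -/
def wp (H : ℕ) (φ : EuclideanSpace ℝ (Fin (3*H+1))) (j : Fin H) : ℝ := φ ⟨j.1, by omega⟩
/-- bias parameters -/
def bp (H : ℕ) (φ : EuclideanSpace ℝ (Fin (3*H+1))) (j : Fin H) : ℝ := φ ⟨H + j.1, by omega⟩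
/-- outer weight parameters -/
def vp (H : ℕ) (φ : EuclideanSpace ℝ (Fin (3*H+1))) (j : Fin H) : ℝ := φ ⟨2*H + j.1, by omega⟩
/-- output bias -/
def cp (H : ℕ) (φ : EuclideanSpace ℝ (Fin (3*H+1))) : ℝ := φ ⟨3*H, by omega⟩

/-- realization of the one-hidden-layer ReLU network -/
def realization (H : ℕ) (φ : EuclideanSpace ℝ (Fin (3*H+1))) (x : ℝ) : ℝ :=
  cp H φ + ∑ j : Fin H, vp H φ j * max (wp H φ j * x + bp H φ j) 0

/-- risk with constant target α -/
def risk (H : ℕ) (α : ℝ) (φ : EuclideanSpace ℝ (Fin (3*H+1))) : ℝ :=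
  ∫ y in (0:ℝ)..1, (realization H φ y - α)^2

/-- activity interval I_j^φ -/
def actSet (H : ℕ) (φ : EuclideanSpace ℝ (Fin (3*H+1))) (j : Fin H) : Set ℝ :=
  {x | x ∈ Set.Icc (0:ℝ) 1 ∧ 0 < wp H φ j * x + bp H φ j}

/-- generalized gradient G -/
def grad (H : ℕ) (α : ℝ) (φ : EuclideanSpace ℝ (Fin (3*H+1))) :
    EuclideanSpace ℝ (Fin (3*H+1)) := WithLp.toLp 2 <| fun i =>
  if h : i.1 < H then
    2 * vp H φ ⟨i.1, h⟩ * ∫ x in actSet H φ ⟨i.1, h⟩, x * (realization H φ x - α)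
  else if h2 : i.1 < 2*H then
    2 * vp H φ ⟨i.1 - H, by omega⟩ * ∫ x in actSet H φ ⟨i.1 - H, by omega⟩, (realization H φ x - α)
  else if h3 : i.1 < 3*H then
    2 * ∫ x in (0:ℝ)..1,
      max (wp H φ ⟨i.1 - 2*H, by omega⟩ * x + bp H φ ⟨i.1 - 2*H, by omega⟩) 0 * (realization H φ x - α)
  else 2 * ∫ x in (0:ℝ)..1, (realization H φ x - α)

/-- Lyapunov function V -/
def lyap (H : ℕ) (α : ℝ) (φ : EuclideanSpace ℝ (Fin (3*H+1))) : ℝ :=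
  ‖φ‖^2 + (cp H φ - 2*α)^2

/-! Expanding the square gives
`V(φ - γG) - V(φ) = -2γ (⟪φ, G⟫ + (c - 2α) G_c) + γ² (‖G‖² + G_c²)`.
Since the ReLU is positively homogeneous, the weight and bias coordinates of neuron `j` pair with
`G` to the same value `2 v_j ∫ relu_j (N - α)` as its outer coordinate does, and summing over the
neurons yields `⟪φ, G⟫ + (c - 2α) G_c = 4 L`. Cauchy–Schwarz on `[0, 1]` bounds every coordinate
of `G` and gives `‖G‖² + G_c² ≤ 8 (V + 1) L`. So a step decreases `V` by at least `4γL` as soon as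
`γ (V + 1) ≤ 1/2`; the step-size condition ensures this while `V(Θ_n) ≤ V(Θ_0)`, and the descent
itself keeps it true by induction. -/

theorem sq_integral_le_measureReal_mul_integral_sq {Ω : Type*} [MeasurableSpace Ω]
    {μ : Measure Ω} [IsFiniteMeasure μ] {f : Ω → ℝ} (hf : Integrable f μ)
    (hf2 : Integrable (fun x => f x ^ 2) μ) :
    (∫ x, f x ∂μ) ^ 2 ≤ μ.real Set.univ * ∫ x, f x ^ 2 ∂μ := by
  have hquad : ∀ t : ℝ,
      0 ≤ μ.real Set.univ * (t * t) + (-2 * ∫ x, f x ∂μ) * t + ∫ x, f x ^ 2 ∂μ := by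
    intro t
    have hexpand : ∫ x, (f x - t) ^ 2 ∂μ
        = μ.real Set.univ * (t * t) + (-2 * ∫ x, f x ∂μ) * t + ∫ x, f x ^ 2 ∂μ := by
      have hsq : ∀ x, (f x - t) ^ 2 = (f x ^ 2 + (-2 * t) * f x) + t * t := fun x => by ring
      simp only [hsq]
      rw [integral_add (f := fun x => f x ^ 2 + (-2 * t) * f x)
          (hf2.add (hf.const_mul _)) (integrable_const _),
        integral_add hf2 (hf.const_mul _), integral_const_mul, integral_const, smul_eq_mul]
      ring
    exact hexpand ▸ integral_nonneg fun x => sq_nonneg _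
  have := discrim_le_zero hquad
  rw [discrim] at this
  linarith

theorem sq_setIntegral_mul_le {s : Set ℝ} (hs : MeasurableSet s) (hsub : s ⊆ Set.Icc 0 1)
    {h E : ℝ → ℝ} (hh : Continuous h) (hE : Continuous E) {c : ℝ} (hc : ∀ x ∈ s, |h x| ≤ c) :
    (∫ x in s, h x * E x) ^ 2 ≤ c ^ 2 * ∫ x in Set.Icc 0 1, E x ^ 2 := by
  have hvol : volume.real s ≤ 1 := by
    simpa using measureReal_mono hsub (measure_Icc_lt_top (μ := volume)).ne
  have : IsFiniteMeasure (volume.restrict s) :=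
    isFiniteMeasure_restrict.2 ((measure_mono (μ := volume) hsub).trans_lt measure_Icc_lt_top).ne
  have hint : ∀ {g : ℝ → ℝ}, Continuous g → IntegrableOn g s :=
    fun hg => hg.integrableOn_Icc.mono_set hsub
  calc (∫ x in s, h x * E x) ^ 2
      ≤ volume.real s * ∫ x in s, (h x * E x) ^ 2 := by
        simpa using sq_integral_le_measureReal_mul_integral_sq (hint (hh.mul hE))
          (hint ((hh.mul hE).pow 2))
    _ ≤ 1 * ∫ x in s, c ^ 2 * E x ^ 2 := by
        refine mul_le_mul hvol (setIntegral_mono_on (hint ((hh.mul hE).pow 2))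
          (hint (continuous_const.mul (hE.pow 2))) hs fun x hx => ?_)
          (setIntegral_nonneg hs fun x _ => sq_nonneg _) zero_le_one
        rw [mul_pow, ← sq_abs (h x)]
        gcongr
        exact hc x hx
    _ ≤ c ^ 2 * ∫ x in Set.Icc 0 1, E x ^ 2 := by
        rw [one_mul, integral_const_mul]
        gcongr ?_ * ?_
        exact setIntegral_mono_set (hE.pow 2).integrableOn_Icc
          (Filter.Eventually.of_forall fun x => sq_nonneg (E x)) hsub.eventuallyLE

theorem intervalIntegral_eq_setIntegral_Icc {a b : ℝ} (hab : a ≤ b) (f : ℝ → ℝ) :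
    ∫ x in a..b, f x = ∫ x in Set.Icc a b, f x := by
  rw [intervalIntegral.integral_of_le hab, integral_Icc_eq_integral_Ioc]

theorem Fin.sum_three_mul_add_one {M : Type*} [AddCommMonoid M] (H : ℕ) (f : Fin (3*H+1) → M) :
    ∑ i, f i = ∑ j : Fin H, f ⟨j, by omega⟩ + ∑ j : Fin H, f ⟨H + j, by omega⟩
      + ∑ j : Fin H, f ⟨2*H + j, by omega⟩ + f ⟨3*H, by omega⟩ := by
  rw [Fin.sum_univ_castSucc, ← Fin.sum_congr' _ (show H + H + H = 3*H by ring),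
    Fin.sum_univ_add, Fin.sum_univ_add]
  congr 1
  refine congrArg₂ _ rfl (Finset.sum_congr rfl fun j _ => congrArg f (Fin.ext ?_))
  simp only [Fin.val_castSucc, Fin.val_cast, Fin.val_natAdd]
  omega

section Network

variable {H : ℕ} (α : ℝ) (φ : EuclideanSpace ℝ (Fin (3*H+1)))

@[fun_prop]
theorem continuous_realization : Continuous (realization H φ) := by
  unfold realization
  fun_prop

theorem measurableSet_actSet (j : Fin H) : MeasurableSet (actSet H φ j) :=
  measurableSet_Icc.inter (isOpen_lt continuous_const
    ((continuous_const.mul continuous_id).add continuous_const)).measurableSet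

theorem actSet_subset_Icc (j : Fin H) : actSet H φ j ⊆ Set.Icc 0 1 := fun _ hx => hx.1

theorem risk_eq_setIntegral :
    risk H α φ = ∫ x in Set.Icc 0 1, (realization H φ x - α) ^ 2 :=
  intervalIntegral_eq_setIntegral_Icc zero_le_one _

theorem risk_nonneg : 0 ≤ risk H α φ :=
  intervalIntegral.integral_nonneg zero_le_one fun _ _ => sq_nonneg _

theorem lyap_nonneg : 0 ≤ lyap H α φ := by
  unfold lyap
  positivity

theorem EuclideanSpace.norm_sq_eq_sum_blocks (x : EuclideanSpace ℝ (Fin (3*H+1))) :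
    ‖x‖ ^ 2 = ∑ j : Fin H, x ⟨j, by omega⟩ ^ 2 + ∑ j : Fin H, x ⟨H + j, by omega⟩ ^ 2
      + ∑ j : Fin H, x ⟨2*H + j, by omega⟩ ^ 2 + x ⟨3*H, by omega⟩ ^ 2 := by
  rw [EuclideanSpace.real_norm_sq_eq, Fin.sum_three_mul_add_one]

theorem grad_apply_weight (j : Fin H) :
    grad H α φ ⟨j, by omega⟩ = 2 * vp H φ j * ∫ x in actSet H φ j, x * (realization H φ x - α) := by
  simp only [grad, WithLp.ofLp_toLp, dif_pos j.isLt, Fin.eta]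

theorem grad_apply_bias (j : Fin H) :
    grad H α φ ⟨H + j, by omega⟩ = 2 * vp H φ j * ∫ x in actSet H φ j, (realization H φ x - α) := by
  have hj : (⟨H + j - H, by omega⟩ : Fin H) = j := Fin.ext (by simp)
  simp only [grad, WithLp.ofLp_toLp, dif_neg (show ¬ H + j.1 < H by omega),
    dif_pos (show H + j.1 < 2*H by omega), hj]

theorem grad_apply_outer (j : Fin H) :
    grad H α φ ⟨2*H + j, by omega⟩
      = 2 * ∫ x in (0:ℝ)..1, max (wp H φ j * x + bp H φ j) 0 * (realization H φ x - α) := by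
  have hj : (⟨2*H + j - 2*H, by omega⟩ : Fin H) = j := Fin.ext (by simp)
  simp only [grad, WithLp.ofLp_toLp, dif_neg (show ¬ 2*H + j.1 < H by omega),
    dif_neg (show ¬ 2*H + j.1 < 2*H by omega), dif_pos (show 2*H + j.1 < 3*H by omega), hj]

theorem grad_apply_bias_out :
    grad H α φ ⟨3*H, by omega⟩ = 2 * ∫ x in (0:ℝ)..1, (realization H φ x - α) := by
  simp only [grad, WithLp.ofLp_toLp, dif_neg (show ¬ 3*H < H by omega),
    dif_neg (show ¬ 3*H < 2*H by omega), dif_neg (lt_irrefl (3*H))]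

theorem setIntegral_Icc_relu_mul (j : Fin H) {E : ℝ → ℝ} (hE : Continuous E) :
    ∫ x in Set.Icc 0 1, max (wp H φ j * x + bp H φ j) 0 * E x
      = wp H φ j * (∫ x in actSet H φ j, x * E x) + bp H φ j * ∫ x in actSet H φ j, E x := by
  have hint : ∀ {g : ℝ → ℝ}, Continuous g → IntegrableOn g (actSet H φ j) :=
    fun hg => hg.integrableOn_Icc.mono_set (actSet_subset_Icc φ j)
  rw [setIntegral_eq_of_subset_of_forall_sdiff_eq_zero measurableSet_Icc
      (actSet_subset_Icc φ j) fun x hx => ?inactive,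
    ← integral_const_mul (wp H φ j), ← integral_const_mul (bp H φ j),
    ← integral_add (hint (g := fun x => wp H φ j * (x * E x)) (by fun_prop))
      (hint (g := fun x => bp H φ j * E x) (by fun_prop))]
  case inactive =>
    rw [max_eq_right (not_lt.mp fun hpos => hx.2 ⟨hx.1, hpos⟩), zero_mul]
  refine setIntegral_congr_fun (measurableSet_actSet φ j) fun x hx => ?_
  simp only [max_eq_left hx.2.le]
  ring

theorem sum_outer_mul_setIntegral_relu_mul {E : ℝ → ℝ} (hE : Continuous E) :
    ∑ j, vp H φ j * ∫ x in Set.Icc 0 1, max (wp H φ j * x + bp H φ j) 0 * E x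
      = ∫ x in Set.Icc 0 1, (realization H φ x - cp H φ) * E x := by
  simp_rw [← integral_const_mul]
  rw [← integral_finsetSum _ fun j _ => (by fun_prop : Continuous _).integrableOn_Icc]
  refine integral_congr_ae (Filter.Eventually.of_forall fun x => ?_)
  simp only [realization, add_sub_cancel_left, Finset.sum_mul, mul_assoc]

theorem inner_grad_add_mul_grad_bias_out :
    inner ℝ φ (grad H α φ) + (cp H φ - 2*α) * grad H α φ ⟨3*H, by omega⟩ = 4 * risk H α φ := by
  have hE : Continuous fun x => realization H φ x - α :=
    (continuous_realization φ).sub continuous_const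
  have hinner : inner ℝ φ (grad H α φ) = ∑ i, φ i * grad H α φ i := by
    simp only [PiLp.inner_apply, RCLike.inner_apply, Real.ringHom_apply, mul_comm]
  have hneuron : ∀ j : Fin H,
      φ ⟨j, by omega⟩ * grad H α φ ⟨j, by omega⟩
        + φ ⟨H + j, by omega⟩ * grad H α φ ⟨H + j, by omega⟩
        + φ ⟨2*H + j, by omega⟩ * grad H α φ ⟨2*H + j, by omega⟩
      = 4 * (vp H φ j *
          ∫ x in Set.Icc 0 1, max (wp H φ j * x + bp H φ j) 0 * (realization H φ x - α)) := by
    intro j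
    rw [grad_apply_weight, grad_apply_bias, grad_apply_outer,
      intervalIntegral_eq_setIntegral_Icc zero_le_one, setIntegral_Icc_relu_mul φ j hE]
    change wp H φ j * _ + bp H φ j * _ + vp H φ j * _ = _
    ring
  have hsplit : ∫ x in Set.Icc 0 1, (realization H φ x - α) ^ 2
      = (∫ x in Set.Icc 0 1, (realization H φ x - cp H φ) * (realization H φ x - α))
        + (cp H φ - α) * ∫ x in Set.Icc 0 1, (realization H φ x - α) := by
    rw [← integral_const_mul, ← integral_add (by fun_prop : Continuous _).integrableOn_Icc
      (by fun_prop : Continuous _).integrableOn_Icc]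
    exact integral_congr_ae (Filter.Eventually.of_forall fun x => by ring)
  rw [hinner, Fin.sum_three_mul_add_one, ← Finset.sum_add_distrib, ← Finset.sum_add_distrib,
    Finset.sum_congr rfl fun j _ => hneuron j, ← Finset.mul_sum,
    sum_outer_mul_setIntegral_relu_mul φ hE, grad_apply_bias_out,
    intervalIntegral_eq_setIntegral_Icc zero_le_one, risk_eq_setIntegral, hsplit]
  change 4 * _ + cp H φ * _ + _ = _
  ring

theorem sq_grad_apply_weight_le (j : Fin H) :
    grad H α φ ⟨j, by omega⟩ ^ 2 ≤ 4 * risk H α φ * vp H φ j ^ 2 := by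
  have hI : (∫ x in actSet H φ j, x * (realization H φ x - α)) ^ 2
      ≤ 1 ^ 2 * ∫ x in Set.Icc 0 1, (realization H φ x - α) ^ 2 :=
    sq_setIntegral_mul_le (measurableSet_actSet φ j) (actSet_subset_Icc φ j) continuous_id
      (by fun_prop) fun x hx => abs_le.2 ⟨by simp only [id]; linarith [hx.1.1], hx.1.2⟩
  rw [grad_apply_weight, risk_eq_setIntegral]
  nlinarith [mul_le_mul_of_nonneg_left hI (sq_nonneg (2 * vp H φ j))]

theorem sq_grad_apply_bias_le (j : Fin H) :
    grad H α φ ⟨H + j, by omega⟩ ^ 2 ≤ 4 * risk H α φ * vp H φ j ^ 2 := by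
  have hI : (∫ x in actSet H φ j, (realization H φ x - α)) ^ 2
      ≤ ∫ x in Set.Icc 0 1, (realization H φ x - α) ^ 2 := by
    simpa using sq_setIntegral_mul_le (measurableSet_actSet φ j) (actSet_subset_Icc φ j)
      continuous_const (E := fun x => realization H φ x - α) (by fun_prop)
      fun x _ => (abs_one (α := ℝ)).le
  rw [grad_apply_bias, risk_eq_setIntegral]
  nlinarith [mul_le_mul_of_nonneg_left hI (sq_nonneg (2 * vp H φ j))]

theorem sq_grad_apply_outer_le (j : Fin H) :
    grad H α φ ⟨2*H + j, by omega⟩ ^ 2 ≤ 8 * risk H α φ * (wp H φ j ^ 2 + bp H φ j ^ 2) := by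
  have hrelu : ∀ x ∈ Set.Icc (0:ℝ) 1,
      |max (wp H φ j * x + bp H φ j) 0| ≤ |wp H φ j| + |bp H φ j| := by
    intro x hx
    rw [abs_of_nonneg (le_max_right _ _)]
    refine max_le ?_ (by positivity)
    calc wp H φ j * x + bp H φ j ≤ |wp H φ j| * |x| + |bp H φ j| := by
          rw [← abs_mul]; exact add_le_add (le_abs_self _) (le_abs_self _)
      _ ≤ |wp H φ j| + |bp H φ j| := by
          gcongr
          exact mul_le_of_le_one_right (abs_nonneg _) (abs_le.2 ⟨by linarith [hx.1], hx.2⟩)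
  have hI := sq_setIntegral_mul_le measurableSet_Icc subset_rfl (by fun_prop)
    (E := fun x => realization H φ x - α) (by fun_prop) hrelu
  have hcoef : (|wp H φ j| + |bp H φ j|) ^ 2 ≤ 2 * (wp H φ j ^ 2 + bp H φ j ^ 2) := by
    nlinarith [sq_nonneg (|wp H φ j| - |bp H φ j|), sq_abs (wp H φ j), sq_abs (bp H φ j)]
  rw [grad_apply_outer, intervalIntegral_eq_setIntegral_Icc zero_le_one, risk_eq_setIntegral]
  nlinarith [mul_le_mul_of_nonneg_right hcoef (risk_eq_setIntegral α φ ▸ risk_nonneg α φ)]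

theorem sq_grad_apply_bias_out_le : grad H α φ ⟨3*H, by omega⟩ ^ 2 ≤ 4 * risk H α φ := by
  have hI : (∫ x in Set.Icc 0 1, (realization H φ x - α)) ^ 2
      ≤ ∫ x in Set.Icc 0 1, (realization H φ x - α) ^ 2 := by
    simpa using sq_setIntegral_mul_le measurableSet_Icc subset_rfl continuous_const
      (E := fun x => realization H φ x - α) (by fun_prop) fun x _ => (abs_one (α := ℝ)).le
  rw [grad_apply_bias_out, intervalIntegral_eq_setIntegral_Icc zero_le_one, risk_eq_setIntegral]
  linarith

theorem norm_sq_grad_add_sq_grad_bias_out_le :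
    ‖grad H α φ‖ ^ 2 + grad H α φ ⟨3*H, by omega⟩ ^ 2 ≤ 8 * (lyap H α φ + 1) * risk H α φ := by
  have hweight := Finset.sum_le_sum fun j (_ : j ∈ Finset.univ) => sq_grad_apply_weight_le α φ j
  have hbias := Finset.sum_le_sum fun j (_ : j ∈ Finset.univ) => sq_grad_apply_bias_le α φ j
  have houter := Finset.sum_le_sum fun j (_ : j ∈ Finset.univ) => sq_grad_apply_outer_le α φ j
  rw [← Finset.mul_sum] at hweight hbias houter
  rw [Finset.sum_add_distrib] at houter
  have hparams : ∑ j, wp H φ j ^ 2 + ∑ j, bp H φ j ^ 2 + ∑ j, vp H φ j ^ 2 ≤ lyap H α φ := by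
    have hφ := EuclideanSpace.norm_sq_eq_sum_blocks φ
    unfold lyap
    change _ = ∑ j, wp H φ j ^ 2 + ∑ j, bp H φ j ^ 2 + ∑ j, vp H φ j ^ 2 + cp H φ ^ 2 at hφ
    nlinarith [sq_nonneg (cp H φ), sq_nonneg (cp H φ - 2*α)]
  rw [EuclideanSpace.norm_sq_eq_sum_blocks]
  nlinarith [mul_le_mul_of_nonneg_left hparams (risk_nonneg α φ), sq_grad_apply_bias_out_le α φ]

theorem lyap_sub_smul_grad (γ : ℝ) :
    lyap H α (φ - γ • grad H α φ) = lyap H α φ - 8 * γ * risk H α φ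
      + γ ^ 2 * (‖grad H α φ‖ ^ 2 + grad H α φ ⟨3*H, by omega⟩ ^ 2) := by
  have hcp : cp H (φ - γ • grad H α φ) = cp H φ - γ * grad H α φ ⟨3*H, by omega⟩ := rfl
  unfold lyap
  rw [hcp, norm_sub_sq_real, real_inner_smul_right, norm_smul, mul_pow, Real.norm_eq_abs, sq_abs]
  linear_combination (-2 * γ) * inner_grad_add_mul_grad_bias_out α φ

theorem lyap_sub_smul_grad_sub_lyap_le {γ : ℝ} (hγ : 0 ≤ γ)
    (hsmall : γ * (lyap H α φ + 1) ≤ 1 / 2) :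
    lyap H α (φ - γ • grad H α φ) - lyap H α φ ≤ -4 * γ * risk H α φ := by
  have hbound := mul_le_mul_of_nonneg_left (norm_sq_grad_add_sq_grad_bias_out_le α φ) (sq_nonneg γ)
  have hstep := mul_le_mul_of_nonneg_left hsmall
    (mul_nonneg (mul_nonneg (by norm_num : (0:ℝ) ≤ 8) hγ) (risk_nonneg α φ))
  rw [lyap_sub_smul_grad]
  nlinarith

end Network

theorem gd_lyapunov_decreasing_general (H : ℕ) (α : ℝ)
    (γ : ℝ) (hγ : 0 < γ)
    (Θ : ℕ → EuclideanSpace ℝ (Fin (3*H+1)))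
    (hrec : ∀ n : ℕ, Θ (n+1) = Θ n - γ • grad H α (Θ n))
    (hγsmall : γ ≤ (4 * lyap H α (Θ 0) + 2)⁻¹) :
    ∀ n : ℕ, lyap H α (Θ (n+1)) - lyap H α (Θ n) ≤ -4 * γ * risk H α (Θ n) ∧
      -4 * γ * risk H α (Θ n) ≤ 0 := by
  have hV0 := lyap_nonneg α (Θ 0)
  have hγV0 : γ * (4 * lyap H α (Θ 0) + 2) ≤ 1 :=
    (le_div_iff₀ (by positivity)).1 (by rwa [one_div])
  have hdescent : ∀ n, lyap H α (Θ n) ≤ lyap H α (Θ 0) →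
      lyap H α (Θ (n+1)) - lyap H α (Θ n) ≤ -4 * γ * risk H α (Θ n) := by
    intro n hn
    rw [hrec n]
    exact lyap_sub_smul_grad_sub_lyap_le α (Θ n) hγ.le (by nlinarith)
  have hbounded : ∀ n, lyap H α (Θ n) ≤ lyap H α (Θ 0) := by
    intro n
    induction n with
    | zero => exact le_rfl
    | succ n ih => nlinarith [hdescent n ih, risk_nonneg α (Θ n)]
  exact fun n => ⟨hdescent n (hbounded n), by nlinarith [risk_nonneg α (Θ n)]⟩

theorem gd_lyapunov_decreasing (H : ℕ) (hH : 0 < H) (α : ℝ)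
    (γ : ℝ) (hγ : 0 < γ)
    (Θ : ℕ → EuclideanSpace ℝ (Fin (3*H+1)))
    (hrec : ∀ n : ℕ, Θ (n+1) = Θ n - γ • grad H α (Θ n))
    (hγsmall : γ ≤ (4 * lyap H α (Θ 0) + 2)⁻¹) :
    ∀ n : ℕ, lyap H α (Θ (n+1)) - lyap H α (Θ n) ≤ -4 * γ * risk H α (Θ n) ∧
      -4 * γ * risk H α (Θ n) ≤ 0 :=
  gd_lyapunov_decreasing_general H α γ hγ Θ hrec hγsmall
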